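/- Let c, r ∈ ℂ∖{0}, let i denote the imaginary unit, and let τ : ℤ⁴ → ℂ (arguments (k,l,m,n)) be nowhere vanishing and satisfy, for all (k,l,m,n) ∈ ℤ⁴, the four bilinear relations: (i) τ(k+1,l−1,m,n)τ(k−1,l−1,m−1,n) − τ(k,l−2,m−1,n)τ(k,l,m,n) = i·c·r·τ(k,l−1,m−1,n)τ(k,l−1,m,n); (ii) τ(k+1,l−1,m,n)τ(k−1,l−1,m−1,n+1) + τ(k,l−2,m−1,n+1)τ(k,l,m,n) = i·c·τ(k,l−1,m−1,n)τ(k,l−1,m,n+1); (iii) τ(k,l−2,m,n+1)τ(k−1,l−1,m−1,n+1) + τ(k,l−2,m−1,n+1)τ(k−1,l−1,m,n+1) = −i·c·r·τ(k−1,l−2,m−1,n+1)τ(k,l−1,m,n+1); (iv) τ(k,l−2,m−1,n)τ(k−1,l−1,m,n+1) − τ(k,l−2,m,n+1)τ(k−1,l−1,m−1,n) = i·c·τ(k,l−1,m,n)τ(k−1,l−2,m−1,n+1). Define z : ℤ² → ℂ by: if n+m is even, with N = (n+m)/2, z(n,m) = (−1)^{(n−m+2)(n−m+1)/2}·τ(−N+1,−N−1,0,m)/τ(−N,−N,0,m);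 if n+m is odd, with N = (n+m+1)/2, z(n,m) = (−1)^{(n−m+2)(n−m+1)/2}·τ(−N+1,−N−1,−1,m)/τ(−N,−N,−1,m). Then for all (n,m) ∈ ℤ² the differences z(n,m)−z(n+1,m), z(n+1,m+1)−z(n,m+1), z(n+1,m)−z(n+1,m+1), z(n,m+1)−z(n,m) are nonzero and ((z(n,m)−z(n+1,m))(z(n+1,m+1)−z(n,m+1))) / ((z(n+1,m)−z(n+1,m+1))(z(n,m+1)−z(n,m))) = r²; that is, z satisfies the discrete Schwarzian KdV equation with constant cross-ratio 1/t where r = t^{−1/2}. -/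

import Mathlib

/-!
On every unit square of `ℤ²` the four values of `z` are, up to a common sign, ratios
`τ(K+1, K-1, i, j) / τ(K, K, i, j)` with `i ∈ {0, -1}`. Each of the four edge differences is,
by exactly one of the bilinear relations, `±icr` or `±ic` times a product of two τ's over the
product of the two denominators. In the cross-ratio the τ's cancel in pairs, leaving
`(icr)² / (ic)² = r²`.
-/

open Complex

section CrossRatio

variable {F : Type*} [Field F]

/-- `A, B, C, D` stand for `z(n, m), z(n+1, m), z(n, m+1), z(n+1, m+1)`. -/
def HasCrossRatio (A B C D q : F) : Prop :=
  A - B ≠ 0 ∧ D - C ≠ 0 ∧ B - D ≠ 0 ∧ C - A ≠ 0 ∧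
    (A - B) * (D - C) / ((B - D) * (C - A)) = q

theorem hasCrossRatio_of_sub_eq_div {A B C D p q s t x₁ x₂ x₃ x₄ : F}
    (hx₁ : x₁ ≠ 0) (hx₂ : x₂ ≠ 0) (hx₃ : x₃ ≠ 0) (hx₄ : x₄ ≠ 0)
    (hp : p ≠ 0) (hq : q ≠ 0) (hs : s ≠ 0) (ht : t ≠ 0) (hx : x₁ * x₂ = x₃ * x₄)
    (hAB : A - B = p / x₁) (hDC : D - C = q / x₂) (hBD : B - D = s / x₃)
    (hCA : C - A = t / x₄) :
    HasCrossRatio A B C D (p * q / (s * t)) := by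
  refine ⟨?_, ?_, ?_, ?_, ?_⟩
  · rw [hAB]; positivity
  · rw [hDC]; positivity
  · rw [hBD]; positivity
  · rw [hCA]; positivity
  · rw [hAB, hDC, hBD, hCA, div_mul_div_comm, div_mul_div_comm, hx,
      div_div_div_cancel_right₀ (mul_ne_zero hx₃ hx₄)]

theorem HasCrossRatio.mul_left {A B C D q : F} (h : HasCrossRatio A B C D q) {s : F}
    (hs : s ≠ 0) : HasCrossRatio (s * A) (s * B) (s * C) (s * D) q := by
  obtain ⟨hAB, hDC, hBD, hCA, hq⟩ := h
  simp only [HasCrossRatio, ← mul_sub]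
  refine ⟨mul_ne_zero hs hAB, mul_ne_zero hs hDC, mul_ne_zero hs hBD, mul_ne_zero hs hCA, ?_⟩
  rw [← hq]
  field_simp

end CrossRatio

section TauFunction

variable (τ : ℤ → ℤ → ℤ → ℤ → ℂ) (c r : ℂ)

def TauBilinear₁ : Prop := ∀ k l m n : ℤ,
  τ (k+1) (l-1) m n * τ (k-1) (l-1) (m-1) n - τ k (l-2) (m-1) n * τ k l m n
    = I * c * r * (τ k (l-1) (m-1) n * τ k (l-1) m n)

def TauBilinear₂ : Prop := ∀ k l m n : ℤ,
  τ (k+1) (l-1) m n * τ (k-1) (l-1) (m-1) (n+1) + τ k (l-2) (m-1) (n+1) * τ k l m n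
    = I * c * (τ k (l-1) (m-1) n * τ k (l-1) m (n+1))

def TauBilinear₃ : Prop := ∀ k l m n : ℤ,
  τ k (l-2) m (n+1) * τ (k-1) (l-1) (m-1) (n+1) + τ k (l-2) (m-1) (n+1) * τ (k-1) (l-1) m (n+1)
    = -(I * c * r) * (τ (k-1) (l-2) (m-1) (n+1) * τ k (l-1) m (n+1))

def TauBilinear₄ : Prop := ∀ k l m n : ℤ,
  τ k (l-2) (m-1) n * τ (k-1) (l-1) m (n+1) - τ k (l-2) m (n+1) * τ (k-1) (l-1) (m-1) n
    = I * c * (τ k (l-1) m n * τ (k-1) (l-2) (m-1) (n+1))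

/-- `z(n, m)` is `±tauRatio τ (-N) 0 m` for even `n + m` and `±tauRatio τ (-N) (-1) m` for odd
`n + m`. -/
noncomputable def tauRatio (K i j : ℤ) : ℂ := τ (K+1) (K-1) i j / τ K K i j

variable {τ c r}

theorem tauRatio_zero_sub_tauRatio_pred (hτ : ∀ k l m n : ℤ, τ k l m n ≠ 0)
    (h : TauBilinear₁ τ c r) (K j : ℤ) :
    tauRatio τ K 0 j - tauRatio τ (K-1) (-1) j
      = I * c * r * (τ K (K-1) (-1) j * τ K (K-1) 0 j)
        / (τ K K 0 j * τ (K-1) (K-1) (-1) j) := by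
  have hK := h K K 0 j
  rw [zero_sub] at hK
  rw [tauRatio, tauRatio, sub_add_cancel, sub_sub, one_add_one_eq_two,
    div_sub_div _ _ (hτ _ _ _ _) (hτ _ _ _ _)]
  congr 1
  linear_combination hK

theorem tauRatio_zero_add_tauRatio_pred (hτ : ∀ k l m n : ℤ, τ k l m n ≠ 0)
    (h : TauBilinear₂ τ c) (K j : ℤ) :
    tauRatio τ K 0 j + tauRatio τ (K-1) (-1) (j+1)
      = I * c * (τ K (K-1) (-1) j * τ K (K-1) 0 (j+1))
        / (τ K K 0 j * τ (K-1) (K-1) (-1) (j+1)) := by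
  have hK := h K K 0 j
  rw [zero_sub] at hK
  rw [tauRatio, tauRatio, sub_add_cancel, sub_sub, one_add_one_eq_two,
    div_add_div _ _ (hτ _ _ _ _) (hτ _ _ _ _)]
  congr 1
  linear_combination hK

theorem tauRatio_zero_add_tauRatio_neg_one (hτ : ∀ k l m n : ℤ, τ k l m n ≠ 0)
    (h : TauBilinear₃ τ c r) (K j : ℤ) :
    tauRatio τ K 0 j + tauRatio τ K (-1) j
      = -(I * c * r) * (τ K (K-1) (-1) j * τ (K+1) K 0 j) / (τ K K 0 j * τ K K (-1) j) := by
  have hK := h (K+1) (K+1) 0 (j-1)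
  rw [zero_sub, sub_add_cancel, add_sub_cancel_right, show K + 1 - 2 = K - 1 by ring] at hK
  rw [tauRatio, tauRatio, div_add_div _ _ (hτ _ _ _ _) (hτ _ _ _ _)]
  congr 1
  linear_combination hK

theorem tauRatio_neg_one_sub_tauRatio_zero (hτ : ∀ k l m n : ℤ, τ k l m n ≠ 0)
    (h : TauBilinear₄ τ c) (K j : ℤ) :
    tauRatio τ K (-1) j - tauRatio τ K 0 (j+1)
      = I * c * (τ (K+1) K 0 j * τ K (K-1) (-1) (j+1)) / (τ K K (-1) j * τ K K 0 (j+1)) := by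
  have hK := h (K+1) (K+1) 0 j
  rw [zero_sub, add_sub_cancel_right, show K + 1 - 2 = K - 1 by ring] at hK
  rw [tauRatio, tauRatio, div_sub_div _ _ (hτ _ _ _ _) (hτ _ _ _ _)]
  congr 1
  linear_combination hK

theorem hasCrossRatio_tauRatio_even (hτ : ∀ k l m n : ℤ, τ k l m n ≠ 0) (hc : c ≠ 0)
    (hr : r ≠ 0) (h₁ : TauBilinear₁ τ c r) (h₂ : TauBilinear₂ τ c) (h₃ : TauBilinear₃ τ c r)
    (h₄ : TauBilinear₄ τ c) (K j : ℤ) :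
    HasCrossRatio (tauRatio τ K 0 j) (tauRatio τ (K-1) (-1) j)
      (-tauRatio τ (K-1) (-1) (j+1)) (tauRatio τ (K-1) 0 (j+1)) (r ^ 2) := by
  have hAB := tauRatio_zero_sub_tauRatio_pred hτ h₁ K j
  have hDC := (sub_neg_eq_add _ _).trans (tauRatio_zero_add_tauRatio_neg_one hτ h₃ (K-1) (j+1))
  have hBD := tauRatio_neg_one_sub_tauRatio_zero hτ h₄ (K-1) j
  have hCA := (neg_sub_left _ _).trans
    (congrArg Neg.neg (tauRatio_zero_add_tauRatio_pred hτ h₂ K j))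
  rw [← neg_div] at hCA
  convert hasCrossRatio_of_sub_eq_div ?_ ?_ ?_ ?_ ?_ ?_ ?_ ?_ (by ring) hAB hDC hBD hCA using 1
  · simp only [sub_add_cancel]
    rw [eq_div_iff (by simp [hτ, hc])]
    ring
  all_goals simp [hτ, hc, hr]

theorem hasCrossRatio_tauRatio_odd (hτ : ∀ k l m n : ℤ, τ k l m n ≠ 0) (hc : c ≠ 0)
    (hr : r ≠ 0) (h₁ : TauBilinear₁ τ c r) (h₂ : TauBilinear₂ τ c) (h₃ : TauBilinear₃ τ c r)
    (h₄ : TauBilinear₄ τ c) (K j : ℤ) :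
    HasCrossRatio (-tauRatio τ K (-1) j) (tauRatio τ K 0 j)
      (-tauRatio τ K 0 (j+1)) (-tauRatio τ (K-1) (-1) (j+1)) (r ^ 2) := by
  have hAB := (neg_sub_left _ _).trans
    (congrArg Neg.neg (tauRatio_zero_add_tauRatio_neg_one hτ h₃ K j))
  rw [← neg_div] at hAB
  have hDC := ((sub_neg_eq_add _ _).trans (neg_add_eq_sub _ _)).trans
    (tauRatio_zero_sub_tauRatio_pred hτ h₁ K (j+1))
  have hBD := (sub_neg_eq_add _ _).trans (tauRatio_zero_add_tauRatio_pred hτ h₂ K j)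
  have hCA := ((sub_neg_eq_add _ _).trans (neg_add_eq_sub _ _)).trans
    (tauRatio_neg_one_sub_tauRatio_zero hτ h₄ K j)
  convert hasCrossRatio_of_sub_eq_div ?_ ?_ ?_ ?_ ?_ ?_ ?_ ?_ (by ring) hAB hDC hBD hCA using 1
  · rw [eq_div_iff (by simp [hτ, hc])]
    ring
  all_goals simp [hτ, hc, hr]

end TauFunction

noncomputable def negOnePowTriangular (d : ℤ) : ℂ := (-1) ^ ((d + 2) * (d + 1) / 2)

theorem negOnePowTriangular_ne_zero (d : ℤ) : negOnePowTriangular d ≠ 0 :=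
  zpow_ne_zero _ (by norm_num)

theorem negOnePowTriangular_add_one (d : ℤ) :
    negOnePowTriangular (d + 1) = (-1) ^ d * negOnePowTriangular d := by
  have h : (d + 1 + 2) * (d + 1 + 1) / 2 = (d + 2) * (d + 1) / 2 + d + 2 * 1 := by
    rw [show (d + 1 + 2) * (d + 1 + 1) = (d + 2) * (d + 1) + (d + 2) * 2 by ring,
      Int.add_mul_ediv_right _ _ two_ne_zero]
    ring
  have hne : (-1 : ℂ) ≠ 0 := by norm_num
  rw [negOnePowTriangular, negOnePowTriangular, h, zpow_add₀ hne, zpow_add₀ hne,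
    (even_two_mul _).neg_one_zpow]
  ring

theorem negOnePowTriangular_sub_one (d : ℤ) :
    negOnePowTriangular (d - 1) = -(-1) ^ d * negOnePowTriangular d := by
  have h : (d - 1 + 2) * (d - 1 + 1) / 2 = (d + 2) * (d + 1) / 2 + (d + 1) + 2 * -(d + 1) := by
    rw [show (d - 1 + 2) * (d - 1 + 1) = (d + 2) * (d + 1) + (-(d + 1)) * 2 by ring,
      Int.add_mul_ediv_right _ _ two_ne_zero]
    ring
  have hne : (-1 : ℂ) ≠ 0 := by norm_num
  rw [negOnePowTriangular, negOnePowTriangular, h, zpow_add₀ hne, zpow_add₀ hne,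
    zpow_add_one₀ hne, (even_two_mul _).neg_one_zpow]
  ring

section Vertices

variable {τ : ℤ → ℤ → ℤ → ℤ → ℂ} {z : ℤ → ℤ → ℂ} {q : ℂ}

theorem hasCrossRatio_of_tauRatio_even
    (hE : ∀ n m K : ℤ, n + m = -2 * K →
      z n m = negOnePowTriangular (n - m) * tauRatio τ K 0 m)
    (hO : ∀ n m K : ℤ, n + m = -2 * K - 1 →
      z n m = negOnePowTriangular (n - m) * tauRatio τ K (-1) m)
    {n m K : ℤ} (hK : n + m = -2 * K)
    (hquad : HasCrossRatio (tauRatio τ K 0 m) (tauRatio τ (K-1) (-1) m)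
      (-tauRatio τ (K-1) (-1) (m+1)) (tauRatio τ (K-1) 0 (m+1)) q) :
    HasCrossRatio (z n m) (z (n+1) m) (z n (m+1)) (z (n+1) (m+1)) q := by
  have hε : (-1 : ℂ) ^ (n - m) = 1 := Even.neg_one_zpow ⟨-K - m, by omega⟩
  have hB : z (n+1) m = negOnePowTriangular (n - m) * tauRatio τ (K-1) (-1) m := by
    rw [hO _ _ (K-1) (by omega), show n + 1 - m = n - m + 1 by ring,
      negOnePowTriangular_add_one, hε, one_mul]
  have hC : z n (m+1) = negOnePowTriangular (n - m) * -tauRatio τ (K-1) (-1) (m+1) := by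
    rw [hO _ _ (K-1) (by omega), show n - (m + 1) = n - m - 1 by ring,
      negOnePowTriangular_sub_one, hε]
    ring
  have hD : z (n+1) (m+1) = negOnePowTriangular (n - m) * tauRatio τ (K-1) 0 (m+1) := by
    rw [hE _ _ (K-1) (by omega), show n + 1 - (m + 1) = n - m by ring]
  rw [hE n m K hK, hB, hC, hD]
  exact hquad.mul_left (negOnePowTriangular_ne_zero _)

theorem hasCrossRatio_of_tauRatio_odd
    (hE : ∀ n m K : ℤ, n + m = -2 * K →
      z n m = negOnePowTriangular (n - m) * tauRatio τ K 0 m)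
    (hO : ∀ n m K : ℤ, n + m = -2 * K - 1 →
      z n m = negOnePowTriangular (n - m) * tauRatio τ K (-1) m)
    {n m K : ℤ} (hK : n + m = -2 * K - 1)
    (hquad : HasCrossRatio (-tauRatio τ K (-1) m) (tauRatio τ K 0 m)
      (-tauRatio τ K 0 (m+1)) (-tauRatio τ (K-1) (-1) (m+1)) q) :
    HasCrossRatio (z n m) (z (n+1) m) (z n (m+1)) (z (n+1) (m+1)) q := by
  have hε : (-1 : ℂ) ^ (n - m) = -1 := Odd.neg_one_zpow ⟨-K - m - 1, by omega⟩
  have hA : z n m = -negOnePowTriangular (n - m) * -tauRatio τ K (-1) m := by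
    rw [hO n m K hK]
    ring
  have hB : z (n+1) m = -negOnePowTriangular (n - m) * tauRatio τ K 0 m := by
    rw [hE _ _ K (by omega), show n + 1 - m = n - m + 1 by ring,
      negOnePowTriangular_add_one, hε, neg_one_mul]
  have hC : z n (m+1) = -negOnePowTriangular (n - m) * -tauRatio τ K 0 (m+1) := by
    rw [hE _ _ K (by omega), show n - (m + 1) = n - m - 1 by ring,
      negOnePowTriangular_sub_one, hε]
    ring
  have hD :
      z (n+1) (m+1) = -negOnePowTriangular (n - m) * -tauRatio τ (K-1) (-1) (m+1) := by
    rw [hO _ _ (K-1) (by omega), show n + 1 - (m + 1) = n - m by ring]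
    ring
  rw [hA, hB, hC, hD]
  exact hquad.mul_left (neg_ne_zero.2 (negOnePowTriangular_ne_zero _))

end Vertices

/-- From a nowhere vanishing `τ : ℤ⁴ → ℂ` satisfying the four bilinear relations of the
Painlevé VI (type D₄⁽¹⁾) τ functions (second family, with the imaginary unit `i`), the
parity-dependent ratio `z(n,m)` satisfies the discrete Schwarzian KdV equation with constant
cross-ratio `r² = 1/t`. -/
theorem stmt_12 (c r : ℂ) (hc : c ≠ 0) (hr : r ≠ 0)
    (τ : ℤ → ℤ → ℤ → ℤ → ℂ) (hτ : ∀ k l m n : ℤ, τ k l m n ≠ 0)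
    (hb1 : ∀ k l m n : ℤ,
      τ (k+1) (l-1) m n * τ (k-1) (l-1) (m-1) n - τ k (l-2) (m-1) n * τ k l m n
        = Complex.I * c * r * (τ k (l-1) (m-1) n * τ k (l-1) m n))
    (hb2 : ∀ k l m n : ℤ,
      τ (k+1) (l-1) m n * τ (k-1) (l-1) (m-1) (n+1) + τ k (l-2) (m-1) (n+1) * τ k l m n
        = Complex.I * c * (τ k (l-1) (m-1) n * τ k (l-1) m (n+1)))
    (hb3 : ∀ k l m n : ℤ,
      τ k (l-2) m (n+1) * τ (k-1) (l-1) (m-1) (n+1) + τ k (l-2) (m-1) (n+1) * τ (k-1) (l-1) m (n+1)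
        = -(Complex.I * c * r) * (τ (k-1) (l-2) (m-1) (n+1) * τ k (l-1) m (n+1)))
    (hb4 : ∀ k l m n : ℤ,
      τ k (l-2) (m-1) n * τ (k-1) (l-1) m (n+1) - τ k (l-2) m (n+1) * τ (k-1) (l-1) (m-1) n
        = Complex.I * c * (τ k (l-1) m n * τ (k-1) (l-2) (m-1) (n+1)))
    (z : ℤ → ℤ → ℂ)
    (hz_even : ∀ n m N : ℤ, n + m = 2*N →
      z n m = (-1 : ℂ) ^ (((n - m + 2) * (n - m + 1)) / 2)
          * τ (-N+1) (-N-1) 0 m / τ (-N) (-N) 0 m)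
    (hz_odd : ∀ n m N : ℤ, n + m = 2*N - 1 →
      z n m = (-1 : ℂ) ^ (((n - m + 2) * (n - m + 1)) / 2)
          * τ (-N+1) (-N-1) (-1) m / τ (-N) (-N) (-1) m) :
    ∀ n m : ℤ,
      z n m - z (n+1) m ≠ 0 ∧ z (n+1) (m+1) - z n (m+1) ≠ 0
      ∧ z (n+1) m - z (n+1) (m+1) ≠ 0 ∧ z n (m+1) - z n m ≠ 0
      ∧ ((z n m - z (n+1) m) * (z (n+1) (m+1) - z n (m+1)))
          / ((z (n+1) m - z (n+1) (m+1)) * (z n (m+1) - z n m))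
        = r ^ 2 := by
  have hE : ∀ n m K : ℤ, n + m = -2 * K →
      z n m = negOnePowTriangular (n - m) * tauRatio τ K 0 m := fun n m K hK => by
    rw [hz_even n m (-K) (by omega), neg_neg, mul_div_assoc]
    rfl
  have hO : ∀ n m K : ℤ, n + m = -2 * K - 1 →
      z n m = negOnePowTriangular (n - m) * tauRatio τ K (-1) m := fun n m K hK => by
    rw [hz_odd n m (-K) (by omega), neg_neg, mul_div_assoc]
    rfl
  intro n m
  obtain ⟨K, hK | hK⟩ := Int.even_or_odd' (-(n + m))
  · exact hasCrossRatio_of_tauRatio_even hE hO (by omega)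
      (hasCrossRatio_tauRatio_even hτ hc hr hb1 hb2 hb3 hb4 K m)
  · exact hasCrossRatio_of_tauRatio_odd hE hO (by omega)
      (hasCrossRatio_tauRatio_odd hτ hc hr hb1 hb2 hb3 hb4 K m)
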